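/- Consistency of the KL projection under a correctly specified conditional Bradley–Terry model: Let K ≥ 2, let ρ be a weight system on {1,…,K} whose comparison graph is connected, and suppose the target probability system satisfies q_{kl} = σ(θ⁰_k − θ⁰_l) for all k ≠ l, where θ⁰ ∈ ℝ^K has θ⁰_1 = 0. Then θ⁰ satisfies the estimating equations U_k(θ⁰) = 0 for all k ∈ {1,…,K}, and θ⁰ is the unique vector θ ∈ ℝ^K with θ_1 = 0 satisfying U_k(θ) = 0 for all k ∈ {1,…,K}. -/

import Mathlib

/-!
If `θ` is another normalized solution, look at a vertex `k` where `d = θ - θ⁰` is maximal.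
Every summand of `U_k(θ) = ∑ ρ_kl (σ(θ_k - θ_l) - σ(θ⁰_k - θ⁰_l))` is nonnegative, since `σ` is
increasing and `θ_k - θ_l ≥ θ⁰_k - θ⁰_l`; as the sum vanishes, strict monotonicity forces
`d_l = d_k` for every neighbour `l` of `k`. By connectedness `d` is constant, and the
normalization at the reference player makes it `0`.
-/

open scoped BigOperators

/-- The logistic sigmoid function `σ(t) = 1/(1+exp(−t))`. -/
noncomputable def sigmoid (t : ℝ) : ℝ := 1 / (1 + Real.exp (-t))

open Finset

theorem sigmoid_eq_real_sigmoid : sigmoid = Real.sigmoid :=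
  funext fun _ => one_div _

theorem sigmoid_strictMono : StrictMono sigmoid :=
  sigmoid_eq_real_sigmoid ▸ Real.sigmoid_strictMono

theorem SimpleGraph.Preconnected.forall_of_adj {V : Type*} {G : SimpleGraph V}
    (hG : G.Preconnected) {P : V → Prop} {u : V} (hu : P u)
    (hadj : ∀ v w, G.Adj v w → P v → P w) (v : V) : P v := by
  induction (G.reachable_iff_reflTransGen u v).mp (hG u v) with
  | refl => exact hu
  | tail _ hvw ih => exact hadj _ _ hvw ih

section BradleyTerry

variable {ι : Type*} [Fintype ι] [DecidableEq ι] {ρ q : ι → ι → ℝ} {θ θ0 : ι → ℝ}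

noncomputable def estimatingFunction (ρ q : ι → ι → ℝ) (θ : ι → ℝ) (k : ι) : ℝ :=
  ∑ l ∈ univ.filter (fun l => l ≠ k), ρ k l * (sigmoid (θ k - θ l) - q k l)

theorem estimatingFunction_eq_of_model (hmodel : ∀ k l, k ≠ l → q k l = sigmoid (θ0 k - θ0 l))
    (θ : ι → ℝ) (k : ι) :
    estimatingFunction ρ q θ k = ∑ l ∈ univ.filter (fun l => l ≠ k),
      ρ k l * (sigmoid (θ k - θ l) - sigmoid (θ0 k - θ0 l)) := by
  refine sum_congr rfl fun l hl => ?_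
  rw [hmodel k l (mem_filter.mp hl).2.symm]

theorem estimatingFunction_model_eq_zero
    (hmodel : ∀ k l, k ≠ l → q k l = sigmoid (θ0 k - θ0 l)) (k : ι) :
    estimatingFunction ρ q θ0 k = 0 := by
  simp only [estimatingFunction_eq_of_model hmodel, sub_self, mul_zero, sum_const_zero]

theorem sub_eq_of_estimatingFunction_eq_zero_of_forall_le (hρnn : ∀ k l, k ≠ l → 0 ≤ ρ k l)
    (hmodel : ∀ k l, k ≠ l → q k l = sigmoid (θ0 k - θ0 l)) {k l : ι}
    (hU : estimatingFunction ρ q θ k = 0) (hmax : ∀ m, θ m - θ0 m ≤ θ k - θ0 k)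
    (hkl : k ≠ l) (hρ : 0 < ρ k l) :
    θ l - θ0 l = θ k - θ0 k := by
  rw [estimatingFunction_eq_of_model hmodel] at hU
  have hterm_nonneg : ∀ m ∈ univ.filter (fun m => m ≠ k),
      0 ≤ ρ k m * (sigmoid (θ k - θ m) - sigmoid (θ0 k - θ0 m)) := fun m hm =>
    mul_nonneg (hρnn k m (mem_filter.mp hm).2.symm)
      (sub_nonneg.mpr (sigmoid_strictMono.monotone (by linarith [hmax m])))
  have hterm := (sum_eq_zero_iff_of_nonneg hterm_nonneg).mp hU l (by simpa using hkl.symm)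
  have hsig := sub_eq_zero.mp ((mul_eq_zero.mp hterm).resolve_left hρ.ne')
  linarith [sigmoid_strictMono.injective hsig]

end BradleyTerry

/-- Consistency of the KL projection under a correctly specified conditional
Bradley–Terry model: if the comparison graph of the weight system is connected
and `q k l = σ(θ⁰ k − θ⁰ l)` with `θ⁰` normalized at the reference player, then
`θ⁰` solves the estimating equations and is the unique normalized solution. -/
theorem kl_projection_consistency
    (K : ℕ) (hK : 2 ≤ K)
    (ρ : Fin K → Fin K → ℝ)
    (hρnn : ∀ k l : Fin K, k ≠ l → 0 ≤ ρ k l)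
    (hρsym : ∀ k l : Fin K, k ≠ l → ρ k l = ρ l k)
    (hconn : (SimpleGraph.fromRel (fun k l : Fin K => 0 < ρ k l)).Connected)
    (q : Fin K → Fin K → ℝ)
    (θ0 : Fin K → ℝ)
    (hθ0 : θ0 ⟨0, by omega⟩ = 0)
    (hmodel : ∀ k l : Fin K, k ≠ l → q k l = sigmoid (θ0 k - θ0 l)) :
    (∀ k : Fin K,
      ∑ l ∈ Finset.univ.filter (fun l => l ≠ k),
        ρ k l * (sigmoid (θ0 k - θ0 l) - q k l) = 0) ∧
    (∀ θ : Fin K → ℝ, θ ⟨0, by omega⟩ = 0 →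
      (∀ k : Fin K,
        ∑ l ∈ Finset.univ.filter (fun l => l ≠ k),
          ρ k l * (sigmoid (θ k - θ l) - q k l) = 0) →
      θ = θ0) := by
  refine ⟨estimatingFunction_model_eq_zero hmodel, fun θ hθ hU => ?_⟩
  have : Nonempty (Fin K) := hconn.nonempty
  obtain ⟨kmax, -, hkmax⟩ := exists_max_image univ (fun k => θ k - θ0 k) univ_nonempty
  have hconst : ∀ v, θ v - θ0 v = θ kmax - θ0 kmax := by
    refine hconn.preconnected.forall_of_adj rfl fun v w hvw hv => ?_
    obtain ⟨hne, hpos⟩ := SimpleGraph.fromRel_adj _ v w |>.mp hvw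
    have hρ : 0 < ρ v w := hpos.elim id fun h => hρsym v w hne ▸ h
    rw [← hv]
    exact sub_eq_of_estimatingFunction_eq_zero_of_forall_le hρnn hmodel (hU v)
      (fun m => hv ▸ hkmax m (mem_univ m)) hne hρ
  funext v
  linarith [hconst v, hconst ⟨0, by omega⟩]
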